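/- arXiv:1804.06537 — 2 statements merged into one kernel-verified Lean document; each statement's English description precedes it below -/
import Mathlib

section
/- Let α > 1, let C ≥ 2, and let A_1, …, A_C be n×n real symmetric positive semidefinite matrices with nonnegative entries whose diagonal entries all equal 1/n (so each has trace 1). Then the matrix-based Rényi α-entropy of the normalized Hadamard product satisfies S_α((A_1∘⋯∘A_C)/tr(A_1∘⋯∘A_C)) ≥ max{S_α(A_1), S_α(A_2), …, S_α(A_C)}; that is, the matrix-based joint entropy of a set of variables is greater than or equal to the maximum of the individual matrix-based entropies. -/
open Matrix Finset

namespace RenyiAux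

variable {n : ℕ}

/-- The eigenvector unitary as a plain matrix. -/
noncomputable def evU {M : Matrix (Fin n) (Fin n) ℝ} (hM : M.IsHermitian) :
    Matrix (Fin n) (Fin n) ℝ := hM.eigenvectorUnitary

lemma evU_row {M : Matrix (Fin n) (Fin n) ℝ} (hM : M.IsHermitian) (a b : Fin n) :
    ∑ i, evU hM a i * evU hM b i = if a = b then 1 else 0 := by
  have h : (evU hM) * star (evU hM) = 1 := Unitary.coe_mul_star_self hM.eigenvectorUnitary
  have h2 : ((evU hM) * star (evU hM)) a b = (1 : Matrix (Fin n) (Fin n) ℝ) a b := by rw [h]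
  simpa [Matrix.mul_apply, Matrix.star_apply, Matrix.one_apply] using h2

lemma evU_col {M : Matrix (Fin n) (Fin n) ℝ} (hM : M.IsHermitian) (i j : Fin n) :
    ∑ a, evU hM a i * evU hM a j = if i = j then 1 else 0 := by
  have h : star (evU hM) * (evU hM) = 1 := Unitary.coe_star_mul_self hM.eigenvectorUnitary
  have h2 : (star (evU hM) * (evU hM)) i j = (1 : Matrix (Fin n) (Fin n) ℝ) i j := by rw [h]
  simpa [Matrix.mul_apply, Matrix.star_apply, Matrix.one_apply] using h2

lemma entry_spec {M : Matrix (Fin n) (Fin n) ℝ} (hM : M.IsHermitian) (a b : Fin n) :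
    M a b = ∑ i, hM.eigenvalues i * (evU hM a i * evU hM b i) := by
  conv_lhs => rw [hM.spectral_theorem]
  simp only [Unitary.conjStarAlgAut_apply, Matrix.mul_apply, Matrix.mul_diagonal, Matrix.diagonal_apply, Matrix.star_apply,
    star_trivial, Function.comp_apply, RCLike.ofReal_real_eq_id, id_eq, mul_ite, mul_zero,
    Finset.sum_ite_eq', Finset.mem_univ, if_true]
  exact Finset.sum_congr rfl fun i _ => by simp only [evU]; ring


lemma isHermitian_of_symm {M : Matrix (Fin n) (Fin n) ℝ} (h : ∀ a b, M b a = M a b) :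
    M.IsHermitian :=
  Matrix.ext fun a b => by rw [Matrix.conjTranspose_apply, star_trivial]; exact h a b

lemma quad_eq (N : Matrix (Fin n) (Fin n) ℝ) (x : Fin n → ℝ) :
    dotProduct (star x) (N *ᵥ x) = ∑ a, ∑ b, x a * N a b * x b := by
  simp only [dotProduct, Matrix.mulVec, Pi.star_apply, star_trivial, dotProduct,
    Finset.mul_sum]
  exact Finset.sum_congr rfl fun a _ => Finset.sum_congr rfl fun b _ => by ring

lemma swap_contract (B U : Matrix (Fin n) (Fin n) ℝ) (v wt : Fin n → ℝ) :
    ∑ i, wt i * (∑ a, ∑ b, (v a * U a i) * B a b * (v b * U b i))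
      = ∑ a, ∑ b, (v a * B a b * v b) * (∑ i, wt i * (U a i * U b i)) :=
  calc ∑ i, wt i * (∑ a, ∑ b, (v a * U a i) * B a b * (v b * U b i))
      = ∑ i, ∑ a, ∑ b, wt i * ((v a * U a i) * B a b * (v b * U b i)) := by
        simp only [Finset.mul_sum]
    _ = ∑ a, ∑ i, ∑ b, wt i * ((v a * U a i) * B a b * (v b * U b i)) := Finset.sum_comm
    _ = ∑ a, ∑ b, ∑ i, wt i * ((v a * U a i) * B a b * (v b * U b i)) :=
        Finset.sum_congr rfl fun a _ => Finset.sum_comm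
    _ = ∑ a, ∑ b, (v a * B a b * v b) * (∑ i, wt i * (U a i * U b i)) := by
        refine Finset.sum_congr rfl fun a _ => Finset.sum_congr rfl fun b _ => ?_
        rw [Finset.mul_sum]
        exact Finset.sum_congr rfl fun i _ => by ring

lemma eig_diag {M : Matrix (Fin n) (Fin n) ℝ} (hM : M.IsHermitian) (j : Fin n) :
    ∑ a, ∑ b, evU hM a j * M a b * evU hM b j = hM.eigenvalues j :=
  calc ∑ a, ∑ b, evU hM a j * M a b * evU hM b j
      = ∑ a, ∑ b, ∑ i, hM.eigenvalues i * ((evU hM a j * evU hM a i) * (evU hM b j * evU hM b i)) := by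
        refine Finset.sum_congr rfl fun a _ => Finset.sum_congr rfl fun b _ => ?_
        rw [entry_spec hM a b]
        simp only [Finset.mul_sum, Finset.sum_mul]
        exact Finset.sum_congr rfl fun i _ => by ring
    _ = ∑ a, ∑ i, ∑ b, hM.eigenvalues i * ((evU hM a j * evU hM a i) * (evU hM b j * evU hM b i)) :=
        Finset.sum_congr rfl fun a _ => Finset.sum_comm
    _ = ∑ i, ∑ a, ∑ b, hM.eigenvalues i * ((evU hM a j * evU hM a i) * (evU hM b j * evU hM b i)) :=
        Finset.sum_comm
    _ = ∑ i, hM.eigenvalues i * ((∑ a, evU hM a j * evU hM a i) * (∑ b, evU hM b j * evU hM b i)) := by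
        refine Finset.sum_congr rfl fun i _ => ?_
        rw [Finset.sum_mul_sum, Finset.mul_sum]
        refine Finset.sum_congr rfl fun a _ => ?_
        rw [Finset.mul_sum]
    _ = hM.eigenvalues j := by
        simp [evU_col hM j, ite_mul, mul_ite]

lemma sum_eigen {M : Matrix (Fin n) (Fin n) ℝ} (hM : M.IsHermitian) :
    ∑ i, hM.eigenvalues i = ∑ a, M a a := by
  calc ∑ i, hM.eigenvalues i
      = ∑ i, hM.eigenvalues i * (∑ a, evU hM a i * evU hM a i) := by
        refine Finset.sum_congr rfl fun i _ => ?_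
        rw [evU_col hM i i, if_pos rfl, mul_one]
    _ = ∑ i, ∑ a, hM.eigenvalues i * (evU hM a i * evU hM a i) := by
        simp only [Finset.mul_sum]
    _ = ∑ a, ∑ i, hM.eigenvalues i * (evU hM a i * evU hM a i) := Finset.sum_comm
    _ = ∑ a, M a a := Finset.sum_congr rfl fun a _ => (entry_spec hM a a).symm

lemma posSemidef_hadamard {M N : Matrix (Fin n) (Fin n) ℝ}
    (hM : M.PosSemidef) (hN : N.PosSemidef) :
    Matrix.PosSemidef (Matrix.of fun a b => M a b * N a b) := by
  refine Matrix.PosSemidef.of_dotProduct_mulVec_nonneg ?_ ?_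
  · exact isHermitian_of_symm fun a b => by
      simp only [Matrix.of_apply]
      rw [← hM.1.apply a b, ← hN.1.apply a b, star_trivial, star_trivial]
  · intro x
    rw [quad_eq]
    have key : ∀ a b, x a * (Matrix.of (fun a b => M a b * N a b)) a b * x b
        = ∑ i, hM.1.eigenvalues i * ((x a * evU hM.1 a i) * N a b * (x b * evU hM.1 b i)) := by
      intro a b
      simp only [Matrix.of_apply]
      rw [entry_spec hM.1 a b]
      simp only [Finset.mul_sum, Finset.sum_mul]
      exact Finset.sum_congr rfl fun i _ => by ring
    have expand : ∑ a, ∑ b, x a * (Matrix.of (fun a b => M a b * N a b)) a b * x b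
        = ∑ i, hM.1.eigenvalues i *
            (∑ a, ∑ b, (x a * evU hM.1 a i) * N a b * (x b * evU hM.1 b i)) :=
      calc ∑ a, ∑ b, x a * (Matrix.of (fun a b => M a b * N a b)) a b * x b
          = ∑ a, ∑ b, ∑ i, hM.1.eigenvalues i *
              ((x a * evU hM.1 a i) * N a b * (x b * evU hM.1 b i)) :=
            Finset.sum_congr rfl fun a _ => Finset.sum_congr rfl fun b _ => key a b
        _ = ∑ a, ∑ i, ∑ b, hM.1.eigenvalues i *
              ((x a * evU hM.1 a i) * N a b * (x b * evU hM.1 b i)) :=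
            Finset.sum_congr rfl fun a _ => Finset.sum_comm
        _ = ∑ i, ∑ a, ∑ b, hM.1.eigenvalues i *
              ((x a * evU hM.1 a i) * N a b * (x b * evU hM.1 b i)) := Finset.sum_comm
        _ = ∑ i, hM.1.eigenvalues i *
              (∑ a, ∑ b, (x a * evU hM.1 a i) * N a b * (x b * evU hM.1 b i)) := by
            simp only [← Finset.mul_sum]
    rw [expand]
    refine Finset.sum_nonneg fun i _ => mul_nonneg (hM.eigenvalues_nonneg i) ?_
    have h2 := hN.dotProduct_mulVec_nonneg (fun a => x a * evU hM.1 a i)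
    rwa [quad_eq] at h2

lemma posSemidef_prod {C : ℕ} (A : Fin C → Matrix (Fin n) (Fin n) ℝ)
    (hpsd : ∀ k, (A k).PosSemidef) (s : Finset (Fin C)) :
    Matrix.PosSemidef (Matrix.of fun a b => ∏ j ∈ s, A j a b) := by
  classical
  induction s using Finset.induction with
  | empty =>
    simp only [Finset.prod_empty]
    refine Matrix.PosSemidef.of_dotProduct_mulVec_nonneg ?_ ?_
    · exact isHermitian_of_symm fun a b => rfl
    · intro x
      rw [quad_eq]
      have : ∑ a, ∑ b, x a * (Matrix.of fun _ _ => (1:ℝ)) a b * x b = (∑ a, x a) * (∑ a, x a) := by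
        rw [Finset.sum_mul_sum]
        exact Finset.sum_congr rfl fun a _ => Finset.sum_congr rfl fun b _ => by
          simp [Matrix.of_apply]
      rw [this]
      exact mul_self_nonneg _
  | @insert j s hj ih =>
    have : (Matrix.of fun a b => ∏ m ∈ insert j s, A m a b)
        = Matrix.of fun a b => A j a b * (Matrix.of fun a b => ∏ m ∈ s, A m a b) a b := by
      ext a b
      simp [Finset.prod_insert hj]
    rw [this]
    exact posSemidef_hadamard (hpsd j) ih

end RenyiAux

/-- Matrix-based Rényi α-entropy: `(1/(1-α)) · log₂ (∑ λᵢ(A)^α)` for a Hermitian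
(real symmetric) matrix `A`, and `0` otherwise. -/
noncomputable def Salpha {n : ℕ} (α : ℝ) (A : Matrix (Fin n) (Fin n) ℝ) : ℝ :=
  if h : A.IsHermitian then (1 / (1 - α)) * Real.logb 2 (∑ i, (h.eigenvalues i) ^ α) else 0

/-- Entrywise (Hadamard) product of a finite family of matrices. -/
noncomputable def hadamardProd {n C : ℕ} (A : Fin C → Matrix (Fin n) (Fin n) ℝ) :
    Matrix (Fin n) (Fin n) ℝ :=
  fun i j => ∏ k, A k i j

/-- Hadamard product normalized by its trace. -/
noncomputable def normHadamardProd {n C : ℕ} (A : Fin C → Matrix (Fin n) (Fin n) ℝ) :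
    Matrix (Fin n) (Fin n) ℝ :=
  (Matrix.trace (hadamardProd A))⁻¹ • hadamardProd A

set_option maxHeartbeats 1000000 in
/-- the matrix-based joint entropy (entropy of the normalized Hadamard
product) is ≥ the maximum of the individual matrix-based entropies. -/
theorem matrix_joint_entropy_ge_max {n C : ℕ} (hC : 2 ≤ C) (α : ℝ) (hα : 1 < α)
    (A : Fin C → Matrix (Fin n) (Fin n) ℝ)
    (hpsd : ∀ k, (A k).PosSemidef)
    (hnonneg : ∀ k i j, 0 ≤ A k i j)
    (hdiag : ∀ k i, A k i i = 1 / (n : ℝ)) :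
    ∀ k, Salpha α (A k) ≤ Salpha α (normHadamardProd A) := by
  classical
  intro k
  have hA : (A k).IsHermitian := (hpsd k).1
  have hNh : (normHadamardProd A).IsHermitian := by
    apply RenyiAux.isHermitian_of_symm
    intro a b
    simp only [normHadamardProd, Matrix.smul_apply, smul_eq_mul]
    congr 1
    show ∏ j, A j b a = ∏ j, A j a b
    exact Finset.prod_congr rfl fun j _ => by
      rw [← (hpsd j).1.apply a b, star_trivial]
  rcases Nat.eq_zero_or_pos n with hn | hn
  · subst hn
    unfold Salpha
    rw [dif_pos hA, dif_pos hNh]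
    simp
  · -- main case
    have hnR : (0:ℝ) < n := by exact_mod_cast hn
    set B : Matrix (Fin n) (Fin n) ℝ :=
      Matrix.of (fun a b => ∏ j ∈ Finset.univ.erase k, A j a b) with hBdef
    have hB : B.PosSemidef := RenyiAux.posSemidef_prod A hpsd _
    set c : ℝ := ((n : ℝ))⁻¹ ^ (C - 1) with hcdef
    have hc : 0 < c := by positivity
    have hBdiag : ∀ a, B a a = c := by
      intro a
      simp only [hBdef, Matrix.of_apply]
      rw [Finset.prod_congr rfl (fun j _ => hdiag j a), Finset.prod_const,
        Finset.card_erase_of_mem (Finset.mem_univ k), Finset.card_univ, Fintype.card_fin,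
        one_div]
    have hHent : ∀ a b, hadamardProd A a b = A k a b * B a b := by
      intro a b
      simp only [hadamardProd, hBdef, Matrix.of_apply]
      exact (Finset.mul_prod_erase Finset.univ _ (Finset.mem_univ k)).symm
    have htr : Matrix.trace (hadamardProd A) = c := by
      have h1 : Matrix.trace (hadamardProd A) = ∑ a, ∏ j, A j a a := rfl
      rw [h1, Finset.sum_congr rfl
        (fun a _ => Finset.prod_congr rfl (fun j _ => hdiag j a))]
      simp only [Finset.prod_const, Finset.card_univ, Fintype.card_fin]
      rw [Finset.sum_const, Finset.card_univ, Fintype.card_fin, nsmul_eq_mul]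
      have hC1 : C - 1 + 1 = C := by omega
      have h2 : ((n:ℝ))⁻¹ ^ C = ((n:ℝ))⁻¹ ^ (C - 1) * ((n:ℝ))⁻¹ := by
        rw [← pow_succ, hC1]
      rw [one_div, h2, hcdef, mul_comm (((n:ℝ))⁻¹ ^ (C - 1)) _, ← mul_assoc,
        mul_inv_cancel₀ hnR.ne', one_mul]
    have hNent : ∀ a b, normHadamardProd A a b = c⁻¹ * (A k a b * B a b) := by
      intro a b
      simp only [normHadamardProd, Matrix.smul_apply, smul_eq_mul, htr, hHent]
    set p : Fin n → Fin n → ℝ := fun j i => c⁻¹ *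
      ∑ a, ∑ b, (RenyiAux.evU hNh a j * RenyiAux.evU hA a i) * B a b *
        (RenyiAux.evU hNh b j * RenyiAux.evU hA b i) with hp
    have hp0 : ∀ j i, 0 ≤ p j i := by
      intro j i
      rw [hp]
      refine mul_nonneg (inv_nonneg.2 hc.le) ?_
      have h2 := hB.dotProduct_mulVec_nonneg (fun a => RenyiAux.evU hNh a j * RenyiAux.evU hA a i)
      rwa [RenyiAux.quad_eq] at h2
    have hrow : ∀ j, ∑ i, p j i = 1 := by
      intro j
      have e1 : ∑ i, p j i = c⁻¹ * ∑ i, (1:ℝ) *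
          (∑ a, ∑ b, (RenyiAux.evU hNh a j * RenyiAux.evU hA a i) * B a b *
            (RenyiAux.evU hNh b j * RenyiAux.evU hA b i)) := by
        rw [Finset.mul_sum]
        exact Finset.sum_congr rfl fun i _ => by rw [hp, one_mul]
      rw [e1, RenyiAux.swap_contract B (RenyiAux.evU hA)
        (fun a => RenyiAux.evU hNh a j) (fun _ => (1:ℝ))]
      have e2 : ∀ a b : Fin n, (∑ i, (1:ℝ) * (RenyiAux.evU hA a i * RenyiAux.evU hA b i))
          = if a = b then 1 else 0 := by
        intro a b; simp only [one_mul]; exact RenyiAux.evU_row hA a b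
      have e5 : ∑ a, ∑ b, (RenyiAux.evU hNh a j * B a b * RenyiAux.evU hNh b j) *
          (∑ i, (1:ℝ) * (RenyiAux.evU hA a i * RenyiAux.evU hA b i)) = c :=
        calc ∑ a, ∑ b, (RenyiAux.evU hNh a j * B a b * RenyiAux.evU hNh b j) *
            (∑ i, (1:ℝ) * (RenyiAux.evU hA a i * RenyiAux.evU hA b i))
            = ∑ a, RenyiAux.evU hNh a j * B a a * RenyiAux.evU hNh a j := by
              simp only [e2, mul_ite, mul_one, mul_zero, Finset.sum_ite_eq,
                Finset.mem_univ, if_true]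
          _ = ∑ a, c * (RenyiAux.evU hNh a j * RenyiAux.evU hNh a j) :=
              Finset.sum_congr rfl fun a _ => by rw [hBdiag a]; ring
          _ = c * ∑ a, RenyiAux.evU hNh a j * RenyiAux.evU hNh a j := by
              rw [← Finset.mul_sum]
          _ = c := by rw [RenyiAux.evU_col hNh j j, if_pos rfl, mul_one]
      rw [e5, inv_mul_cancel₀ hc.ne']
    have hcol : ∀ i, ∑ j, p j i = 1 := by
      intro i
      have e1 : ∑ j, p j i = c⁻¹ * ∑ j, (1:ℝ) *
          (∑ a, ∑ b, (RenyiAux.evU hA a i * RenyiAux.evU hNh a j) * B a b *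
            (RenyiAux.evU hA b i * RenyiAux.evU hNh b j)) := by
        rw [Finset.mul_sum]
        refine Finset.sum_congr rfl fun j _ => ?_
        rw [one_mul]
        show c⁻¹ * (∑ a, ∑ b, (RenyiAux.evU hNh a j * RenyiAux.evU hA a i) * B a b *
          (RenyiAux.evU hNh b j * RenyiAux.evU hA b i)) = _
        exact congrArg (fun s => c⁻¹ * s)
          (Finset.sum_congr rfl fun a _ => Finset.sum_congr rfl fun b _ => by ring)
      rw [e1, RenyiAux.swap_contract B (RenyiAux.evU hNh)
        (fun a => RenyiAux.evU hA a i) (fun _ => (1:ℝ))]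
      have e2 : ∀ a b : Fin n, (∑ j, (1:ℝ) * (RenyiAux.evU hNh a j * RenyiAux.evU hNh b j))
          = if a = b then 1 else 0 := by
        intro a b; simp only [one_mul]; exact RenyiAux.evU_row hNh a b
      have e5 : ∑ a, ∑ b, (RenyiAux.evU hA a i * B a b * RenyiAux.evU hA b i) *
          (∑ j, (1:ℝ) * (RenyiAux.evU hNh a j * RenyiAux.evU hNh b j)) = c :=
        calc ∑ a, ∑ b, (RenyiAux.evU hA a i * B a b * RenyiAux.evU hA b i) *
            (∑ j, (1:ℝ) * (RenyiAux.evU hNh a j * RenyiAux.evU hNh b j))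
            = ∑ a, RenyiAux.evU hA a i * B a a * RenyiAux.evU hA a i := by
              simp only [e2, mul_ite, mul_one, mul_zero, Finset.sum_ite_eq,
                Finset.mem_univ, if_true]
          _ = ∑ a, c * (RenyiAux.evU hA a i * RenyiAux.evU hA a i) :=
              Finset.sum_congr rfl fun a _ => by rw [hBdiag a]; ring
          _ = c * ∑ a, RenyiAux.evU hA a i * RenyiAux.evU hA a i := by
              rw [← Finset.mul_sum]
          _ = c := by rw [RenyiAux.evU_col hA i i, if_pos rfl, mul_one]
      rw [e5, inv_mul_cancel₀ hc.ne']
    have hmu : ∀ j, hNh.eigenvalues j = ∑ i, p j i * hA.eigenvalues i := by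
      intro j
      have e1 : ∑ i, p j i * hA.eigenvalues i = c⁻¹ * ∑ i, hA.eigenvalues i *
          (∑ a, ∑ b, (RenyiAux.evU hNh a j * RenyiAux.evU hA a i) * B a b *
            (RenyiAux.evU hNh b j * RenyiAux.evU hA b i)) := by
        rw [Finset.mul_sum]
        refine Finset.sum_congr rfl fun i _ => ?_
        show c⁻¹ * (∑ a, ∑ b, (RenyiAux.evU hNh a j * RenyiAux.evU hA a i) * B a b *
          (RenyiAux.evU hNh b j * RenyiAux.evU hA b i)) * hA.eigenvalues i = _
        ring
      have e3 : c⁻¹ * (∑ a, ∑ b, (RenyiAux.evU hNh a j * B a b * RenyiAux.evU hNh b j) *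
          (∑ i, hA.eigenvalues i * (RenyiAux.evU hA a i * RenyiAux.evU hA b i)))
          = ∑ a, ∑ b, RenyiAux.evU hNh a j * normHadamardProd A a b * RenyiAux.evU hNh b j := by
        rw [Finset.mul_sum]
        refine Finset.sum_congr rfl fun a _ => ?_
        rw [Finset.mul_sum]
        refine Finset.sum_congr rfl fun b _ => ?_
        rw [← RenyiAux.entry_spec hA a b, hNent a b]
        ring
      rw [e1, RenyiAux.swap_contract B (RenyiAux.evU hA)
        (fun a => RenyiAux.evU hNh a j) hA.eigenvalues, e3, RenyiAux.eig_diag hNh j]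
    have hlnn : ∀ i, 0 ≤ hA.eigenvalues i := (hpsd k).eigenvalues_nonneg
    have jensen : ∀ j, hNh.eigenvalues j ^ α ≤ ∑ i, p j i * hA.eigenvalues i ^ α := by
      intro j
      rw [hmu j]
      exact Real.rpow_arith_mean_le_arith_mean_rpow Finset.univ (p j) hA.eigenvalues
        (fun i _ => hp0 j i) (hrow j) (fun i _ => hlnn i) hα.le
    have hmain : ∑ j, hNh.eigenvalues j ^ α ≤ ∑ i, hA.eigenvalues i ^ α :=
      calc ∑ j, hNh.eigenvalues j ^ α ≤ ∑ j, ∑ i, p j i * hA.eigenvalues i ^ α :=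
          Finset.sum_le_sum fun j _ => jensen j
        _ = ∑ i, ∑ j, p j i * hA.eigenvalues i ^ α := Finset.sum_comm
        _ = ∑ i, hA.eigenvalues i ^ α := Finset.sum_congr rfl fun i _ => by
            rw [← Finset.sum_mul, hcol i, one_mul]
    have hsuml : ∑ i, hA.eigenvalues i = 1 := by
      rw [RenyiAux.sum_eigen hA, Finset.sum_congr rfl fun a _ => hdiag k a,
        Finset.sum_const, Finset.card_univ, Fintype.card_fin, nsmul_eq_mul,
        mul_one_div, div_self hnR.ne']
    have hsumm : ∑ j, hNh.eigenvalues j = 1 :=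
      calc ∑ j, hNh.eigenvalues j = ∑ j, ∑ i, p j i * hA.eigenvalues i :=
          Finset.sum_congr rfl fun j _ => hmu j
        _ = ∑ i, ∑ j, p j i * hA.eigenvalues i := Finset.sum_comm
        _ = ∑ i, hA.eigenvalues i := Finset.sum_congr rfl fun i _ => by
            rw [← Finset.sum_mul, hcol i, one_mul]
        _ = 1 := hsuml
    have hmnn : ∀ j, 0 ≤ hNh.eigenvalues j := fun j => by
      rw [hmu j]
      exact Finset.sum_nonneg fun i _ => mul_nonneg (hp0 j i) (hlnn i)
    have hposN : 0 < ∑ j, hNh.eigenvalues j ^ α := by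
      have hlt : ∑ _j : Fin n, (0:ℝ) < ∑ j, hNh.eigenvalues j := by
        rw [hsumm]; simp
      obtain ⟨j, -, hj⟩ := Finset.exists_lt_of_sum_lt hlt
      calc (0:ℝ) < hNh.eigenvalues j ^ α := Real.rpow_pos_of_pos hj α
        _ ≤ ∑ j, hNh.eigenvalues j ^ α :=
          Finset.single_le_sum (f := fun j => hNh.eigenvalues j ^ α)
            (fun i _ => Real.rpow_nonneg (hmnn i) α) (Finset.mem_univ j)
    unfold Salpha
    rw [dif_pos hA, dif_pos hNh]
    have hlog : Real.logb 2 (∑ j, hNh.eigenvalues j ^ α) ≤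
        Real.logb 2 (∑ i, hA.eigenvalues i ^ α) :=
      Real.logb_le_logb_of_le one_lt_two hposN hmain
    have hcoef : (1 / (1 - α)) ≤ 0 := by
      apply div_nonpos_of_nonneg_of_nonpos
      · norm_num
      · linarith
    exact mul_le_mul_of_nonpos_left hlog hcoef
end

section
/- Let α > 1, let C ≥ 1, and let B, A_1, …, A_C be n×n real symmetric positive semidefinite matrices with nonnegative entries whose diagonal entries all equal 1/n (so each has trace 1). Then the matrix-based multivariate mutual information is bounded above by the entropy of the input and by the joint entropy of the feature maps: I_α(B; {A_1, …, A_C}) ≤ S_α(B) and I_α(B; {A_1, …, A_C}) ≤ S_α((A_1∘⋯∘A_C)/tr(A_1∘⋯∘A_C)). In particular, the maximum amount of information about the input X that the feature maps of a layer can capture is the entropy of the input. -/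
open Matrix

/-! If `U` and `V` are orthogonal matrices diagonalising `P ⊙ Q` and `P`, the eigenvalues of
`P ⊙ Q` are obtained from those of `P` by the matrix `S i j = (uᵢ ⊙ vⱼ)ᵀ Q (uᵢ ⊙ vⱼ)`, built from
the columns `uᵢ` of `U` and `vⱼ` of `V`. When `Q` is positive semidefinite with unit diagonal,
`S` is doubly stochastic, so Jensen's inequality for the convex map `t ↦ t ^ α` gives
`∑ λᵢ(P ⊙ Q) ^ α ≤ ∑ λᵢ(P) ^ α`; as `1 / (1 - α) < 0` this reads `S_α(P) ≤ S_α(P ⊙ Q)`.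
For matrices with diagonal `1 / n`, appending `B` to the family turns the normalised Hadamard
product `H` of the `A k` into `H ⊙ (n • B) = B ⊙ (n • H)`, and both factors `n • B` and `n • H`
are positive semidefinite with unit diagonal, so the joint entropy dominates both `S_α(B)` and
`S_α(H)`. -/

theorem ConvexOn.sum_comp_mulVec_le_of_mem_doublyStochastic {ι : Type*} [Fintype ι]
    [DecidableEq ι] {S : Matrix ι ι ℝ} (hS : S ∈ doublyStochastic ℝ ι) {s : Set ℝ}
    {f : ℝ → ℝ} (hf : ConvexOn ℝ s f) {x : ι → ℝ} (hx : ∀ i, x i ∈ s) :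
    ∑ i, f ((S *ᵥ x) i) ≤ ∑ i, f (x i) :=
  calc ∑ i, f (∑ j, S i j • x j)
      ≤ ∑ i, ∑ j, S i j • f (x j) := Finset.sum_le_sum fun i _ =>
        hf.map_sum_le (fun j _ => nonneg_of_mem_doublyStochastic hS)
          (sum_row_of_mem_doublyStochastic hS i) fun j _ => hx j
    _ = ∑ j, (∑ i, S i j) * f (x j) := by
        rw [Finset.sum_comm]; simp only [smul_eq_mul, Finset.sum_mul]
    _ = ∑ j, f (x j) := by simp only [sum_col_of_mem_doublyStochastic hS, one_mul]

namespace Matrix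

variable {ι κ R : Type*} [Fintype ι] [Fintype κ]

theorem trace_hadamard_of_forall_apply_self_eq [NonUnitalNonAssocSemiring R]
    (P : Matrix ι ι R) {Q : Matrix ι ι R} {c : R} (hQ : ∀ i, Q i i = c) :
    (P ⊙ Q).trace = P.trace * c := by
  simp [trace, hadamard_apply, hQ, Finset.sum_mul]

theorem sum_dotProduct_mulVec_mul_col_of_mul_transpose_eq_one [CommSemiring R]
    [DecidableEq ι] {V : Matrix ι κ R} (hV : V * Vᵀ = 1) (Q : Matrix ι ι R) (w : ι → R) :
    ∑ j, (fun a => w a * V a j) ⬝ᵥ Q *ᵥ (fun a => w a * V a j) = ∑ a, w a * w a * Q a a := by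
  have hrow (a b : ι) : ∑ j, V a j * V b j = if a = b then 1 else 0 := by
    simpa [mul_apply, one_apply] using congr_fun (congr_fun hV a) b
  calc ∑ j, (fun a => w a * V a j) ⬝ᵥ Q *ᵥ (fun a => w a * V a j)
      = ∑ j, ∑ a, ∑ b, w a * Q a b * w b * (V a j * V b j) := by
        simp only [dotProduct, mulVec, Finset.mul_sum]
        exact Finset.sum_congr rfl fun j _ => Finset.sum_congr rfl fun a _ =>
          Finset.sum_congr rfl fun b _ => by ring
    _ = ∑ a, ∑ b, w a * Q a b * w b * ∑ j, V a j * V b j := by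
        rw [Finset.sum_comm]
        simp only [Finset.mul_sum]
        exact Finset.sum_congr rfl fun a _ => Finset.sum_comm
    _ = ∑ a, w a * w a * Q a a := by
        simp [hrow, mul_right_comm]

theorem dotProduct_hadamard_mulVec_eq_sum [CommSemiring R] {P : Matrix ι ι R}
    {V : Matrix ι κ R} {μ : κ → R} (hP : ∀ a b, P a b = ∑ j, μ j * (V a j * V b j))
    (Q : Matrix ι ι R) (u : ι → R) :
    u ⬝ᵥ (P ⊙ Q) *ᵥ u =
      ∑ j, ((fun a => u a * V a j) ⬝ᵥ Q *ᵥ (fun a => u a * V a j)) * μ j := by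
  calc u ⬝ᵥ (P ⊙ Q) *ᵥ u = ∑ a, ∑ b, ∑ j, u a * V a j * Q a b * (u b * V b j) * μ j := by
        simp only [dotProduct, mulVec, hadamard_apply, hP, Finset.mul_sum, Finset.sum_mul]
        exact Finset.sum_congr rfl fun a _ => Finset.sum_congr rfl fun b _ =>
          Finset.sum_congr rfl fun j _ => by ring
    _ = ∑ j, ∑ a, ∑ b, u a * V a j * Q a b * (u b * V b j) * μ j :=
        (Finset.sum_congr rfl fun a _ => Finset.sum_comm).trans Finset.sum_comm
    _ = _ := by simp only [dotProduct, mulVec, Finset.mul_sum, Finset.sum_mul, mul_assoc]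

variable [DecidableEq ι]

theorem mul_transpose_eq_one_of_mem_unitaryGroup {U : Matrix ι ι ℝ}
    (hU : U ∈ unitaryGroup ι ℝ) : U * Uᵀ = 1 := by
  simpa [star_eq_conjTranspose] using mem_unitaryGroup_iff.mp hU

theorem sum_mul_self_col_of_mem_unitaryGroup {U : Matrix ι ι ℝ}
    (hU : U ∈ unitaryGroup ι ℝ) (i : ι) : ∑ a, U a i * U a i = 1 := by
  have hUU : Uᵀ * U = 1 := by simpa [star_eq_conjTranspose] using mem_unitaryGroup_iff'.mp hU
  simpa [mul_apply] using congr_fun (congr_fun hUU i) i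

theorem quadForm_hadamard_cols_mem_doublyStochastic {U V Q : Matrix ι ι ℝ}
    (hU : U ∈ unitaryGroup ι ℝ) (hV : V ∈ unitaryGroup ι ℝ) (hQ : Q.PosSemidef)
    (hQ1 : ∀ i, Q i i = 1) :
    of (fun i j => (fun a => U a i * V a j) ⬝ᵥ Q *ᵥ (fun a => U a i * V a j)) ∈
      doublyStochastic ℝ ι := by
  refine mem_doublyStochastic_iff_sum.mpr ⟨fun i j => ?_, fun i => ?_, fun j => ?_⟩
  · simpa using hQ.dotProduct_mulVec_nonneg (fun a => U a i * V a j)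
  · simpa [hQ1, sum_mul_self_col_of_mem_unitaryGroup hU] using
      sum_dotProduct_mulVec_mul_col_of_mul_transpose_eq_one
        (mul_transpose_eq_one_of_mem_unitaryGroup hV) Q (fun a => U a i)
  · simpa [hQ1, sum_mul_self_col_of_mem_unitaryGroup hV, mul_comm] using
      sum_dotProduct_mulVec_mul_col_of_mul_transpose_eq_one
        (mul_transpose_eq_one_of_mem_unitaryGroup hU) Q (fun a => V a j)

namespace IsHermitian

theorem apply_eq_sum_eigenvalues_mul {P : Matrix ι ι ℝ} (hP : P.IsHermitian) (a b : ι) :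
    P a b = ∑ j, hP.eigenvalues j * (hP.eigenvectorUnitary a j * hP.eigenvectorUnitary b j) := by
  conv_lhs => rw [hP.spectral_theorem]
  simp [Unitary.conjStarAlgAut_apply, mul_apply, diagonal_apply, mul_comm, mul_assoc]

theorem eigenvalues_eq_dotProduct {P : Matrix ι ι ℝ} (hP : P.IsHermitian) (i : ι) :
    hP.eigenvalues i = (fun a => hP.eigenvectorUnitary a i) ⬝ᵥ
      P *ᵥ (fun a => hP.eigenvectorUnitary a i) := by
  simpa using hP.eigenvalues_eq i

theorem exists_mem_doublyStochastic_eigenvalues_hadamard {P Q : Matrix ι ι ℝ}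
    (hP : P.IsHermitian) (hQ : Q.PosSemidef) (hQ1 : ∀ i, Q i i = 1) :
    ∃ S ∈ doublyStochastic ℝ ι, (hP.hadamard hQ.1).eigenvalues = S *ᵥ hP.eigenvalues := by
  set hPQ := hP.hadamard hQ.1
  refine ⟨_, quadForm_hadamard_cols_mem_doublyStochastic hPQ.eigenvectorUnitary.2
    hP.eigenvectorUnitary.2 hQ hQ1, funext fun i => ?_⟩
  rw [hPQ.eigenvalues_eq_dotProduct,
    dotProduct_hadamard_mulVec_eq_sum hP.apply_eq_sum_eigenvalues_mul]
  rfl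

theorem sum_map_eigenvalues_hadamard_le {P Q : Matrix ι ι ℝ} (hP : P.IsHermitian)
    (hQ : Q.PosSemidef) (hQ1 : ∀ i, Q i i = 1) {s : Set ℝ} {f : ℝ → ℝ} (hf : ConvexOn ℝ s f)
    (hs : ∀ j, hP.eigenvalues j ∈ s) :
    ∑ i, f ((hP.hadamard hQ.1).eigenvalues i) ≤ ∑ i, f (hP.eigenvalues i) := by
  obtain ⟨S, hS, hPQ⟩ := hP.exists_mem_doublyStochastic_eigenvalues_hadamard hQ hQ1
  rw [hPQ]
  exact hf.sum_comp_mulVec_le_of_mem_doublyStochastic hS hs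

end IsHermitian

theorem PosSemidef.sum_rpow_eigenvalues_pos {M : Matrix ι ι ℝ} (hM : M.PosSemidef)
    (htr : 0 < M.trace) (α : ℝ) : 0 < ∑ i, hM.1.eigenvalues i ^ α := by
  obtain ⟨i, -, hi⟩ : ∃ i ∈ Finset.univ, (0 : ι → ℝ) i < hM.1.eigenvalues i := by
    refine Finset.exists_lt_of_sum_lt ?_
    simpa [hM.1.trace_eq_sum_eigenvalues] using htr
  exact (Real.rpow_pos_of_pos hi α).trans_le (Finset.single_le_sum
    (fun j _ => Real.rpow_nonneg (hM.eigenvalues_nonneg j) α) (Finset.mem_univ i))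

theorem trace_eq_one_of_forall_apply_self_eq [DivisionRing R] [CharZero R] {n : ℕ}
    (hn : n ≠ 0) {X : Matrix (Fin n) (Fin n) R} (hX : ∀ i, X i i = 1 / (n : R)) :
    X.trace = 1 := by
  simp [trace, hX, hn]

end Matrix

theorem Salpha_le_Salpha_hadamard {n : ℕ} {α : ℝ} (hα : 1 < α)
    {P Q : Matrix (Fin n) (Fin n) ℝ} (hP : P.PosSemidef) (htr : 0 < P.trace)
    (hQ : Q.PosSemidef) (hQ1 : ∀ i, Q i i = 1) : Salpha α P ≤ Salpha α (P ⊙ Q) := by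
  have hPQ := hP.hadamard hQ
  have hsum := hP.1.sum_map_eigenvalues_hadamard_le hQ hQ1 (convexOn_rpow hα.le)
    hP.eigenvalues_nonneg
  have hpos := hPQ.sum_rpow_eigenvalues_pos
    (by rwa [trace_hadamard_of_forall_apply_self_eq P hQ1, mul_one]) α
  rw [Salpha, Salpha, dif_pos hP.1, dif_pos hPQ.1]
  exact mul_le_mul_of_nonpos_left (Real.logb_le_logb_of_le one_lt_two hpos hsum)
    (div_nonpos_of_nonneg_of_nonpos zero_le_one (by linarith))

section HadamardProd

variable {n C : ℕ}

theorem hadamardProd_snoc (A : Fin C → Matrix (Fin n) (Fin n) ℝ)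
    (B : Matrix (Fin n) (Fin n) ℝ) : hadamardProd (Fin.snoc A B) = hadamardProd A ⊙ B := by
  ext i j
  simp [hadamardProd, Fin.prod_univ_castSucc]

theorem posSemidef_hadamardProd {A : Fin C → Matrix (Fin n) (Fin n) ℝ}
    (hA : ∀ k, (A k).PosSemidef) : (hadamardProd A).PosSemidef := by
  induction C with
  | zero =>
    convert posSemidef_vecMulVec_self_star (1 : Fin n → ℝ)
    ext i j
    simp [hadamardProd, vecMulVec_apply]
  | succ C ih =>
    rw [← Fin.snoc_init_self A, hadamardProd_snoc]
    exact (ih fun k => hA _).hadamard (hA _)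

theorem posSemidef_normHadamardProd {A : Fin C → Matrix (Fin n) (Fin n) ℝ}
    (hA : ∀ k, (A k).PosSemidef) : (normHadamardProd A).PosSemidef :=
  (posSemidef_hadamardProd hA).smul (inv_nonneg.mpr (posSemidef_hadamardProd hA).trace_nonneg)

theorem normHadamardProd_apply_self (hn : n ≠ 0) {A : Fin C → Matrix (Fin n) (Fin n) ℝ}
    (hA : ∀ k i, A k i i = 1 / (n : ℝ)) (i : Fin n) :
    normHadamardProd A i i = 1 / (n : ℝ) := by
  have hn' : (n : ℝ) ≠ 0 := Nat.cast_ne_zero.mpr hn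
  simp [normHadamardProd, hadamardProd, trace, hA]
  field_simp

theorem normHadamardProd_snoc (A : Fin C → Matrix (Fin n) (Fin n) ℝ)
    {B : Matrix (Fin n) (Fin n) ℝ} (hB : ∀ i, B i i = 1 / (n : ℝ)) :
    normHadamardProd (Fin.snoc A B) = normHadamardProd A ⊙ ((n : ℝ) • B) := by
  rw [normHadamardProd, normHadamardProd, hadamardProd_snoc,
    trace_hadamard_of_forall_apply_self_eq _ hB, hadamard_smul, smul_hadamard, smul_smul,
    mul_one_div, inv_div, div_eq_mul_inv]

end HadamardProd

theorem matrix_MMI_le_entropies_general {n C : ℕ} (α : ℝ) (hα : 1 < α)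
    (B : Matrix (Fin n) (Fin n) ℝ) (A : Fin C → Matrix (Fin n) (Fin n) ℝ)
    (hBpsd : B.PosSemidef)
    (hBdiag : ∀ i, B i i = 1 / (n : ℝ))
    (hpsd : ∀ k, (A k).PosSemidef)
    (hdiag : ∀ k i, A k i i = 1 / (n : ℝ)) :
    Salpha α B + Salpha α (normHadamardProd A)
        - Salpha α (normHadamardProd (Fin.snoc A B)) ≤ Salpha α B ∧
    Salpha α B + Salpha α (normHadamardProd A)
        - Salpha α (normHadamardProd (Fin.snoc A B))
      ≤ Salpha α (normHadamardProd A) := by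
  rcases eq_or_ne n 0 with rfl | hn
  · simp [Subsingleton.elim (normHadamardProd A) B,
      Subsingleton.elim (normHadamardProd (Fin.snoc A B)) B]
  have hH := posSemidef_normHadamardProd hpsd
  have hHdiag := normHadamardProd_apply_self hn hdiag
  rw [normHadamardProd_snoc A hBdiag]
  set H := normHadamardProd A
  have hB : Salpha α B ≤ Salpha α (B ⊙ ((n : ℝ) • H)) :=
    Salpha_le_Salpha_hadamard hα hBpsd (by simp [trace_eq_one_of_forall_apply_self_eq hn hBdiag])
      (hH.smul n.cast_nonneg) (by simp [hHdiag, hn])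
  have hA : Salpha α H ≤ Salpha α (H ⊙ ((n : ℝ) • B)) :=
    Salpha_le_Salpha_hadamard hα hH (by simp [trace_eq_one_of_forall_apply_self_eq hn hHdiag])
      (hBpsd.smul n.cast_nonneg) (by simp [hBdiag, hn])
  rw [show H ⊙ ((n : ℝ) • B) = B ⊙ ((n : ℝ) • H) by
    rw [hadamard_smul, hadamard_smul, hadamard_comm]] at hA ⊢
  constructor <;> linarith

/-- the matrix-based multivariate mutual information is bounded above
by the entropy of the input and by the joint entropy of the feature maps. -/
theorem matrix_MMI_le_entropies {n C : ℕ} (hC : 1 ≤ C) (α : ℝ) (hα : 1 < α)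
    (B : Matrix (Fin n) (Fin n) ℝ) (A : Fin C → Matrix (Fin n) (Fin n) ℝ)
    (hBpsd : B.PosSemidef) (hBnonneg : ∀ i j, 0 ≤ B i j)
    (hBdiag : ∀ i, B i i = 1 / (n : ℝ))
    (hpsd : ∀ k, (A k).PosSemidef) (hnonneg : ∀ k i j, 0 ≤ A k i j)
    (hdiag : ∀ k i, A k i i = 1 / (n : ℝ)) :
    Salpha α B + Salpha α (normHadamardProd A)
        - Salpha α (normHadamardProd (Fin.snoc A B)) ≤ Salpha α B ∧
    Salpha α B + Salpha α (normHadamardProd A)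
        - Salpha α (normHadamardProd (Fin.snoc A B))
      ≤ Salpha α (normHadamardProd A) :=
  matrix_MMI_le_entropies_general α hα B A hBpsd hBdiag hpsd hdiag
end
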